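/- arXiv:1904.00243 — 2 statements merged into one kernel-verified Lean document; each statement's English description precedes it below -/
import Mathlib

section
/- Let N be a positive integer, let a, b be real numbers with a > 0, and let f : ZMod N → ℝ be a function satisfying f(x + 1) = a * f(x) + b for all x ∈ ZMod N. Then f is constant. -/
lemma const_of_step (N : ℕ) (hN : 0 < N) (f : ZMod N → ℝ)
    (h : ∀ x : ZMod N, f (x + 1) = f x) : ∀ x y : ZMod N, f x = f y := by
  haveI : NeZero N := ⟨hN.ne'⟩
  suffices hs : ∀ x : ZMod N, f x = f 0 by
    intro x y; rw [hs x, hs y]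
  have key : ∀ k : ℕ, f (k : ZMod N) = f 0 := by
    intro k
    induction k with
    | zero => simp
    | succ n ih => push_cast; rw [h]; exact ih
  intro x
  have := key x.val
  rwa [ZMod.natCast_val, ZMod.cast_id] at this

theorem stmt_0 (N : ℕ) (hN : 0 < N) (a b : ℝ) (ha : 0 < a)
    (f : ZMod N → ℝ) (hf : ∀ x : ZMod N, f (x + 1) = a * f x + b) :
    ∀ x y : ZMod N, f x = f y := by
  haveI : NeZero N := ⟨hN.ne'⟩
  by_cases h1 : a = 1
  · subst h1
    simp only [one_mul] at hf
    -- show b = 0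
    have key : ∀ k : ℕ, f ((k : ZMod N)) = f 0 + k * b := by
      intro k
      induction k with
      | zero => simp
      | succ n ih => push_cast; rw [hf]; rw [ih]; ring
    have hb : b = 0 := by
      have := key N
      simp only [ZMod.natCast_self] at this
      have hN' : (N : ℝ) ≠ 0 := Nat.cast_ne_zero.mpr hN.ne'
      have hmul : (N : ℝ) * b = 0 := by linarith
      exact (mul_eq_zero.mp hmul).resolve_left hN'
    refine const_of_step N hN f ?_
    intro x; rw [hf, hb]; ring
  · obtain ⟨x0, -, hx0⟩ := Finset.exists_max_image Finset.univ f ⟨0, Finset.mem_univ 0⟩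
    obtain ⟨x1, -, hx1⟩ := Finset.exists_min_image Finset.univ f ⟨0, Finset.mem_univ 0⟩
    simp only [Finset.mem_univ, forall_true_left, true_implies] at hx0 hx1
    have hM : f x0 = a * f x0 + b := by
      have h1' : f x0 ≤ a * f x0 + b := by
        have := hf (x0 - 1)
        rw [sub_add_cancel] at this
        rw [this]
        have := hx0 (x0 - 1)
        nlinarith
      have h2' : a * f x0 + b ≤ f x0 := by
        rw [← hf x0]; exact hx0 (x0 + 1)
      linarith
    have hm : f x1 = a * f x1 + b := by
      have h1' : a * f x1 + b ≤ f x1 := by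
        have := hf (x1 - 1)
        rw [sub_add_cancel] at this
        rw [this]
        have := hx1 (x1 - 1)
        nlinarith
      have h2' : f x1 ≤ a * f x1 + b := by
        rw [← hf x1]; exact hx1 (x1 + 1)
      linarith
    have heq : f x0 = f x1 := by
      have : (a - 1) * (f x0 - f x1) = 0 := by linarith
      rcases mul_eq_zero.mp this with h | h
      · exact absurd (by linarith : a = 1) h1
      · linarith
    intro x y
    have h1x := hx1 x
    have h0x := hx0 x
    have h1y := hx1 y
    have h0y := hx0 y
    linarith
end

section
/- Let N be a positive integer, a₁, a₂, b₁, b₂ real numbers with a₁ > 0 and a₂ > 0, and let f : ZMod N × ZMod N → ℝ × ℝ be a function whose first component satisfies f₁(x + 1, y) = a₁ * f₁(x, y) + b₁ and f₁(x, y + 1) = f₁(x, y), and whose second component satisfies f₂(x, y + 1) = a₂ * f₂(x, y) + b₂ and f₂(x + 1, y) = f₂(x, y), for all x, y ∈ ZMod N. Then f is constant. -/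
lemma const_of_step_s6 (N : ℕ) (hN : 0 < N) (g : ZMod N → ℝ) (h : ∀ z, g (z + 1) = g z) :
    ∀ p q : ZMod N, g p = g q := by
  have key : ∀ (n : ℕ) (z : ZMod N), g (z + n) = g z := by
    intro n
    induction n with
    | zero => simp
    | succ n ih =>
      intro z
      have : (((n : ℕ) + 1 : ℕ) : ZMod N) = (n : ZMod N) + 1 := by push_cast; ring
      rw [this, ← add_assoc, h, ih]
  intro p q
  haveI : NeZero N := ⟨hN.ne'⟩
  have : q = p + ((q - p).val : ℕ) := by
    rw [ZMod.natCast_val, ZMod.cast_id]; ring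
  rw [this, key]

lemma const_of_affine (N : ℕ) (hN : 0 < N) (a b : ℝ) (ha : 0 < a)
    (g : ZMod N → ℝ) (h : ∀ z, g (z + 1) = a * g z + b) :
    ∀ p q : ZMod N, g p = g q := by
  have key : ∀ (n : ℕ) (z : ZMod N),
      g (z + n) = a ^ n * g z + b * ∑ i ∈ Finset.range n, a ^ i := by
    intro n
    induction n with
    | zero => simp
    | succ n ih =>
      intro z
      have hc : (((n : ℕ) + 1 : ℕ) : ZMod N) = (n : ZMod N) + 1 := by push_cast; ring
      rw [hc, ← add_assoc, h, ih, geom_sum_succ]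
      ring
  have hcyc : ∀ z : ZMod N, g z = a ^ N * g z + b * ∑ i ∈ Finset.range N, a ^ i := by
    intro z
    have := key N z
    rwa [ZMod.natCast_self, add_zero] at this
  by_cases hA : a ^ N = 1
  · -- then a = 1
    have ha1 : a = 1 := by
      rcases lt_trichotomy a 1 with h1 | h1 | h1
      · have := pow_lt_one₀ ha.le h1 hN.ne'
        linarith
      · exact h1
      · have := one_lt_pow₀ h1 hN.ne'
        linarith
    subst ha1
    have hb : b = 0 := by
      have := hcyc 0
      simp at this
      rcases this with h0 | h0
      · exact h0
      · exact absurd h0 (by positivity)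
    refine const_of_step_s6 N hN g (fun z => ?_)
    rw [h z, hb]; ring
  · intro p q
    have hp := hcyc p
    have hq := hcyc q
    have : (1 - a ^ N) * (g p - g q) = 0 := by linarith
    rcases mul_eq_zero.1 this with h0 | h0
    · exact absurd (by linarith : a ^ N = 1) hA
    · linarith

theorem stmt_6 (N : ℕ) (hN : 0 < N) (a₁ a₂ b₁ b₂ : ℝ) (ha₁ : 0 < a₁) (ha₂ : 0 < a₂)
    (f : ZMod N × ZMod N → ℝ × ℝ)
    (h1x : ∀ x y : ZMod N, (f (x + 1, y)).1 = a₁ * (f (x, y)).1 + b₁)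
    (h1y : ∀ x y : ZMod N, (f (x, y + 1)).1 = (f (x, y)).1)
    (h2y : ∀ x y : ZMod N, (f (x, y + 1)).2 = a₂ * (f (x, y)).2 + b₂)
    (h2x : ∀ x y : ZMod N, (f (x + 1, y)).2 = (f (x, y)).2) :
    ∀ p q : ZMod N × ZMod N, f p = f q := by
  intro p q
  obtain ⟨px, py⟩ := p
  obtain ⟨qx, qy⟩ := q
  have e1 : (f (px, py)).1 = (f (qx, qy)).1 := by
    have hx := const_of_affine N hN a₁ b₁ ha₁ (fun x => (f (x, py)).1) (fun x => h1x x py) px qx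
    have hy := const_of_step_s6 N hN (fun y => (f (qx, y)).1) (fun y => h1y qx y) py qy
    simpa using hx.trans hy
  have e2 : (f (px, py)).2 = (f (qx, qy)).2 := by
    have hy := const_of_affine N hN a₂ b₂ ha₂ (fun y => (f (px, y)).2) (fun y => h2y px y) py qy
    have hx := const_of_step_s6 N hN (fun x => (f (x, qy)).2) (fun x => h2x x qy) px qx
    simpa using hy.trans hx
  exact Prod.ext e1 e2
end
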